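/- If the probability weight of a partition p of {1,...,m} is w(p) ∝ ∏_{cells C} ψ^{(|C|)}(max C) for positive ψ, then the conditional distribution of p given its induced S-path S is uniform on C_S, i.e., equals 1/|C_S| for each p in C_S, where |C_S| = ∏_{j: S_j > S_{j-1}} C(j-1-S_{j-1}, j-S_j). -/

import Mathlib

def IsSPath (m : ℕ) (S : ℕ → ℕ) : Prop :=
  S 0 = 0 ∧ S m = m ∧ ∀ j, 1 ≤ j → j < m → S j ≤ min j (S (j + 1))

def IsPartitionOf (m : ℕ) (P : Finset (Finset ℕ)) : Prop :=
  (∀ C ∈ P, C.Nonempty ∧ C ⊆ Finset.Icc 1 m) ∧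
  (∀ i ∈ Finset.Icc 1 m, ∃! C, C ∈ P ∧ i ∈ C)

def CorrespondsTo (m : ℕ) (S : ℕ → ℕ) (P : Finset (Finset ℕ)) : Prop :=
  IsPartitionOf m P ∧
  (∀ C ∈ P, ∃ j : ℕ, C.max = (j : WithBot ℕ) ∧ S (j - 1) < S j ∧ C.card = S j - S (j - 1)) ∧
  (∀ j ∈ Finset.Icc 1 m, S (j - 1) < S j → ∃ C ∈ P, C.max = (j : WithBot ℕ))

/-!
The weight of a partition only sees the pairs `(max C, #C)`, and on the class `C_S` these are
dictated by `S`: the maxima are the ascents `j` of `S`, with cell sizes `S j - S (j - 1)`. So the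
weight is constant on `C_S`, and conditioning on `S` gives the uniform law on `C_S`. It remains to
count `C_S`, which is done for partitions of an arbitrary finite `T ⊆ ℕ` with prescribed cell
maxima and sizes, by removing the cell with the smallest maximum.
-/

open Finset

structure IsPartitionWithMaxima (T A : Finset ℕ) (k : ℕ → ℕ) (P : Finset (Finset ℕ)) :
    Prop where
  subset : ∀ C ∈ P, C ⊆ T
  cover : ∀ i ∈ T, ∃ C ∈ P, i ∈ C
  eq_of_mem : ∀ C ∈ P, ∀ D ∈ P, ∀ i ∈ C, i ∈ D → C = D
  max_card : ∀ C ∈ P, ∃ j ∈ A, C.max = j ∧ #C = k j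
  exists_max : ∀ j ∈ A, ∃ C ∈ P, C.max = j

open scoped Classical in
noncomputable def partitionsWithMaxima (T A : Finset ℕ) (k : ℕ → ℕ) :
    Finset (Finset (Finset ℕ)) :=
  {P ∈ T.powerset.powerset | IsPartitionWithMaxima T A k P}

def cellsWithMax (T : Finset ℕ) (a n : ℕ) : Finset (Finset ℕ) :=
  {C ∈ T.powerset | C.max = a ∧ #C = n}

variable {T A s C : Finset ℕ} {k : ℕ → ℕ} {P Q : Finset (Finset ℕ)} {a : ℕ}

lemma mem_partitionsWithMaxima :
    P ∈ partitionsWithMaxima T A k ↔ IsPartitionWithMaxima T A k P := by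
  classical
  simp only [partitionsWithMaxima, mem_filter, mem_powerset, and_iff_right_iff_imp]
  exact fun h C hC => mem_powerset.2 (h.subset C hC)

lemma mem_cellsWithMax {n : ℕ} :
    C ∈ cellsWithMax T a n ↔ C ⊆ T ∧ C.max = a ∧ #C = n := by
  simp only [cellsWithMax, mem_filter, mem_powerset]

lemma card_cellsWithMax {n : ℕ} (ha : a ∈ T) (hn : 1 ≤ n) :
    #(cellsWithMax T a n) = (#{x ∈ T | x < a}).choose (n - 1) := by
  rw [← card_powersetCard]
  refine card_nbij' (fun C => C.erase a) (insert a) ?_ ?_ ?_ ?_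
  · intro C hC
    obtain ⟨hCT, hCmax, hCcard⟩ := mem_cellsWithMax.1 hC
    have haC : a ∈ C := mem_of_max hCmax
    refine mem_powersetCard.2 ⟨fun x hx => ?_, by rw [card_erase_of_mem haC, hCcard]⟩
    obtain ⟨hxa, hxC⟩ := mem_erase.1 hx
    exact mem_filter.2 ⟨hCT hxC, (le_max_of_eq hxC hCmax).lt_of_ne hxa⟩
  · intro B hB
    obtain ⟨hBT, hBcard⟩ := mem_powersetCard.1 hB
    have hlt : ∀ x ∈ B, x < a := fun x hx => (mem_filter.1 (hBT hx)).2
    have haB : a ∉ B := fun h => (hlt a h).false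
    refine mem_cellsWithMax.2 ⟨insert_subset ha fun x hx => (mem_filter.1 (hBT hx)).1, ?_, ?_⟩
    · exact le_antisymm (Finset.max_le fun x hx => WithBot.coe_le_coe.2 <|
        (mem_insert.1 hx).elim le_of_eq fun h => (hlt x h).le) (le_max (mem_insert_self a B))
    · rw [card_insert_of_notMem haB, hBcard]
      omega
  · intro C hC
    exact insert_erase (mem_of_max (mem_cellsWithMax.1 hC).2.1)
  · intro B hB
    exact erase_insert fun h => (mem_filter.1 ((mem_powersetCard.1 hB).1 h)).2.false

namespace IsPartitionWithMaxima

lemma prod_eq {M : Type*} [CommMonoid M] (hP : IsPartitionWithMaxima T A k P)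
    (f : ℕ → ℕ → M) : ∏ C ∈ P, f #C (C.max.unbotD 0) = ∏ j ∈ A, f (k j) j := by
  refine prod_nbij (fun C => C.max.unbotD 0) ?_ ?_ ?_ ?_
  · intro C hC
    obtain ⟨j, hj, hCmax, -⟩ := hP.max_card C hC
    simpa [hCmax] using hj
  · intro C hC D hD hCD
    obtain ⟨j, -, hCmax, -⟩ := hP.max_card C hC
    obtain ⟨j', -, hDmax, -⟩ := hP.max_card D hD
    simp only [hCmax, hDmax] at hCD
    subst hCD
    exact hP.eq_of_mem C hC D hD j (mem_of_max hCmax) (mem_of_max hDmax)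
  · intro j hj
    obtain ⟨C, hC, hCmax⟩ := hP.exists_max j hj
    exact ⟨C, hC, by simp [hCmax]⟩
  · intro C hC
    obtain ⟨j, -, hCmax, hCcard⟩ := hP.max_card C hC
    simp [hCmax, hCcard]

lemma notMem_of_sdiff (hQ : IsPartitionWithMaxima (T \ C) A k Q) (haC : a ∈ C) : C ∉ Q :=
  fun hCQ => (mem_sdiff.1 (hQ.subset C hCQ haC)).2 haC

end IsPartitionWithMaxima

lemma isPartitionWithMaxima_insert_iff (has : a ∉ s) (hCT : C ⊆ T) (hCmax : C.max = a)
    (hCcard : #C = k a) (hCQ : C ∉ Q) :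
    IsPartitionWithMaxima T (insert a s) k (insert C Q) ↔
      IsPartitionWithMaxima (T \ C) s k Q := by
  have haC : a ∈ C := mem_of_max hCmax
  constructor
  · intro h
    have hdisj : ∀ D ∈ Q, ∀ i ∈ D, i ∉ C := fun D hD i hiD hiC =>
      hCQ (h.eq_of_mem D (mem_insert_of_mem hD) C (mem_insert_self C Q) i hiD hiC ▸ hD)
    refine ⟨fun D hD i hiD => mem_sdiff.2 ⟨h.subset D (mem_insert_of_mem hD) hiD,
      hdisj D hD i hiD⟩, fun i hi => ?_, fun D hD D' hD' => h.eq_of_mem D (mem_insert_of_mem hD)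
      D' (mem_insert_of_mem hD'), fun D hD => ?_, fun j hj => ?_⟩
    · obtain ⟨hiT, hiC⟩ := mem_sdiff.1 hi
      obtain ⟨D, hD, hiD⟩ := h.cover i hiT
      rcases mem_insert.1 hD with rfl | hD
      · exact absurd hiD hiC
      · exact ⟨D, hD, hiD⟩
    · obtain ⟨j, hj, hDmax, hDcard⟩ := h.max_card D (mem_insert_of_mem hD)
      rcases mem_insert.1 hj with rfl | hj
      · exact absurd haC (hdisj D hD j (mem_of_max hDmax))
      · exact ⟨j, hj, hDmax, hDcard⟩
    · obtain ⟨D, hD, hDmax⟩ := h.exists_max j (mem_insert_of_mem hj)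
      rcases mem_insert.1 hD with rfl | hD
      · have haj : a = j := WithBot.coe_inj.1 (hCmax.symm.trans hDmax)
        exact absurd (haj ▸ hj) has
      · exact ⟨D, hD, hDmax⟩
  · intro h
    have hdisj : ∀ D ∈ Q, ∀ i ∈ D, i ∉ C := fun D hD i hiD =>
      (mem_sdiff.1 (h.subset D hD hiD)).2
    refine ⟨fun D hD => ?_, fun i hi => ?_, fun D hD D' hD' i hiD hiD' => ?_, fun D hD => ?_,
      fun j hj => ?_⟩
    · rcases mem_insert.1 hD with rfl | hD
      · exact hCT
      · exact (h.subset D hD).trans sdiff_subset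
    · by_cases hiC : i ∈ C
      · exact ⟨C, mem_insert_self C Q, hiC⟩
      · obtain ⟨D, hD, hiD⟩ := h.cover i (mem_sdiff.2 ⟨hi, hiC⟩)
        exact ⟨D, mem_insert_of_mem hD, hiD⟩
    · rcases mem_insert.1 hD with hDC | hDQ <;> rcases mem_insert.1 hD' with hD'C | hD'Q
      · rw [hDC, hD'C]
      · exact absurd (hDC ▸ hiD) (hdisj D' hD'Q i hiD')
      · exact absurd (hD'C ▸ hiD') (hdisj D hDQ i hiD)
      · exact h.eq_of_mem D hDQ D' hD'Q i hiD hiD'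
    · rcases mem_insert.1 hD with rfl | hD
      · exact ⟨a, mem_insert_self a s, hCmax, hCcard⟩
      · obtain ⟨j, hj, hDmax, hDcard⟩ := h.max_card D hD
        exact ⟨j, mem_insert_of_mem hj, hDmax, hDcard⟩
    · rcases mem_insert.1 hj with rfl | hj
      · exact ⟨C, mem_insert_self C Q, hCmax⟩
      · obtain ⟨D, hD, hDmax⟩ := h.exists_max j hj
        exact ⟨D, mem_insert_of_mem hD, hDmax⟩

lemma partitionsWithMaxima_empty : partitionsWithMaxima ∅ ∅ k = {∅} := by
  ext P
  rw [mem_partitionsWithMaxima, mem_singleton]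
  constructor
  · intro h
    exact eq_empty_of_forall_notMem fun C hC => by simpa using h.max_card C hC
  · rintro rfl
    exact ⟨by simp, by simp, by simp, by simp, by simp⟩

lemma partitionsWithMaxima_insert (has : a ∉ s) :
    partitionsWithMaxima T (insert a s) k =
      (cellsWithMax T a (k a)).biUnion fun C =>
        (partitionsWithMaxima (T \ C) s k).image (insert C) := by
  ext P
  simp only [mem_biUnion, mem_image, mem_partitionsWithMaxima, mem_cellsWithMax]
  constructor
  · intro h
    obtain ⟨C, hC, hCmax⟩ := h.exists_max a (mem_insert_self a s)
    obtain ⟨j, -, hCmax', hCcard⟩ := h.max_card C hC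
    have hja : j = a := WithBot.coe_inj.1 (hCmax'.symm.trans hCmax)
    subst hja
    refine ⟨C, ⟨h.subset C hC, hCmax, hCcard⟩, P.erase C, ?_, insert_erase hC⟩
    rw [← isPartitionWithMaxima_insert_iff has (h.subset C hC) hCmax hCcard (notMem_erase C P),
      insert_erase hC]
    exact h
  · rintro ⟨C, ⟨hCT, hCmax, hCcard⟩, Q, hQ, rfl⟩
    exact (isPartitionWithMaxima_insert_iff has hCT hCmax hCcard
      (hQ.notMem_of_sdiff (mem_of_max hCmax))).2 hQ

lemma pairwiseDisjoint_image_insert {n : ℕ} :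
    (cellsWithMax T a n : Set (Finset ℕ)).PairwiseDisjoint
      fun C => (partitionsWithMaxima (T \ C) s k).image (insert C) := by
  intro C hC C' hC' hne
  simp only [Function.onFun, disjoint_left, mem_image, mem_partitionsWithMaxima]
  rintro P ⟨Q, -, rfl⟩ ⟨Q', hQ', hQQ'⟩
  have haC : a ∈ C := mem_of_max (mem_cellsWithMax.1 hC).2.1
  have haC' : a ∈ C' := mem_of_max (mem_cellsWithMax.1 hC').2.1
  have hCQ' : C ∈ Q' := (mem_insert.1 (hQQ' ▸ mem_insert_self C Q)).resolve_left hne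
  exact (mem_sdiff.1 (hQ'.subset C hCQ' haC)).2 haC'

lemma card_filter_sdiff {α : Type*} [DecidableEq α] {T C : Finset α} {p : α → Prop}
    [DecidablePred p] (hCT : C ⊆ T) (hC : ∀ x ∈ C, p x) :
    #{x ∈ T \ C | p x} = #{x ∈ T | p x} - #C := by
  rw [← card_sdiff_of_subset fun x hx => mem_filter.2 ⟨hCT hx, hC x hx⟩]
  congr 1
  ext x
  simp only [mem_filter, mem_sdiff]
  tauto

/-- Choosing the cells in increasing order of their maxima, the cell with maximum `j` takes
`k j - 1` elements below `j` among those not used by the earlier cells. -/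
theorem card_partitionsWithMaxima (hAT : A ⊆ T) (hk : ∀ j ∈ A, 1 ≤ k j)
    (hsum : ∑ j ∈ A, k j = #T) :
    #(partitionsWithMaxima T A k) =
      ∏ j ∈ A, (#{x ∈ T | x < j} - ∑ i ∈ A with i < j, k i).choose (k j - 1) := by
  induction A using Finset.induction_on_min generalizing T with
  | empty =>
    obtain rfl : T = ∅ := card_eq_zero.1 (by simpa using hsum.symm)
    simp [partitionsWithMaxima_empty]
  | insert a s hmin ih =>
    have has : a ∉ s := fun h => (hmin a h).false
    rw [sum_insert has] at hsum
    have haT : a ∈ T := hAT (mem_insert_self a s)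
    have hfiber : ∀ C ∈ cellsWithMax T a (k a),
        #((partitionsWithMaxima (T \ C) s k).image (insert C)) =
          ∏ j ∈ s,
            (#{x ∈ T | x < j} - ∑ i ∈ insert a s with i < j, k i).choose (k j - 1) := by
      intro C hC
      obtain ⟨hCT, hCmax, hCcard⟩ := mem_cellsWithMax.1 hC
      have hCa : ∀ x ∈ C, x ≤ a := fun x hx => le_max_of_eq hx hCmax
      have hinj :
          Set.InjOn (insert C) (partitionsWithMaxima (T \ C) s k : Set (Finset (Finset ℕ))) :=
        fun Q hQ Q' hQ' h => by
          have haC : a ∈ C := mem_of_max hCmax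
          rw [← erase_insert ((mem_partitionsWithMaxima.1 (mem_coe.1 hQ)).notMem_of_sdiff haC),
            ← erase_insert ((mem_partitionsWithMaxima.1 (mem_coe.1 hQ')).notMem_of_sdiff haC), h]
      rw [card_image_of_injOn hinj, ih (fun j hj => mem_sdiff.2 ⟨hAT (mem_insert_of_mem hj),
          fun hjC => (hmin j hj).not_ge (hCa j hjC)⟩) (fun j hj => hk j (mem_insert_of_mem hj))
          (by rw [card_sdiff_of_subset hCT, hCcard]; omega)]
      refine prod_congr rfl fun j hj => ?_
      have hCj : ∀ x ∈ C, x < j := fun x hx => (hCa x hx).trans_lt (hmin j hj)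
      rw [card_filter_sdiff hCT hCj, filter_insert, if_pos (hmin j hj),
        sum_insert fun h => has (mem_filter.1 h).1, hCcard, Nat.sub_sub]
    rw [partitionsWithMaxima_insert has, card_biUnion pairwiseDisjoint_image_insert,
      sum_congr rfl hfiber, sum_const, card_cellsWithMax haT (hk a (mem_insert_self a s)),
      smul_eq_mul, prod_insert has, filter_insert, if_neg (lt_irrefl a),
      filter_eq_empty_iff.2 fun j hj => (hmin j hj).not_gt, sum_empty, Nat.sub_zero]

lemma div_sum_eq_one_div_card {ι K : Type*} [DivisionSemiring K] {s : Finset ι} {f : ι → K}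
    {w : K} (hw : w ≠ 0) (hf : ∀ x ∈ s, f x = w) {x : ι} (hx : x ∈ s) :
    f x / ∑ y ∈ s, f y = 1 / #s := by
  rw [sum_congr rfl hf, sum_const, nsmul_eq_mul, hf x hx, div_eq_mul_inv, mul_inv_rev,
    mul_inv_cancel_left₀ hw, one_div]

namespace IsSPath

variable {m : ℕ} {S : ℕ → ℕ}

lemma le_self (hS : IsSPath m S) {j : ℕ} (hj : j ≤ m) : S j ≤ j := by
  obtain ⟨h0, hm, hstep⟩ := hS
  rcases Nat.eq_zero_or_pos j with rfl | hj0
  · exact h0.le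
  · rcases hj.eq_or_lt with rfl | hjm
    · exact hm.le
    · exact (hstep j hj0 hjm).trans (min_le_left _ _)

lemma le_succ (hS : IsSPath m S) {j : ℕ} (hj : j < m) : S j ≤ S (j + 1) := by
  obtain ⟨h0, -, hstep⟩ := hS
  rcases Nat.eq_zero_or_pos j with rfl | hj0
  · exact h0.trans_le (Nat.zero_le _)
  · exact (hstep j hj0 hj).trans (min_le_right _ _)

lemma sum_Icc_tsub (hS : IsSPath m S) {t : ℕ} (ht : t ≤ m) :
    ∑ i ∈ Icc 1 t, (S i - S (i - 1)) = S t := by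
  induction t with
  | zero => simp [hS.1]
  | succ t ih =>
    rw [sum_Icc_succ_top (by omega), ih (by omega), Nat.add_sub_cancel]
    have := hS.le_succ (j := t) (by omega)
    omega

/-- The increments vanish (by truncation) off the ascents, so only the ascents contribute to the
telescoping sum. -/
lemma sum_ascents_lt (hS : IsSPath m S) {j : ℕ} (hj : 1 ≤ j) (hjm : j ≤ m + 1) :
    ∑ i ∈ {i ∈ Icc 1 m | S (i - 1) < S i} with i < j, (S i - S (i - 1)) = S (j - 1) := by
  have hfilter : {i ∈ {i ∈ Icc 1 m | S (i - 1) < S i} | i < j} =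
      {i ∈ Icc 1 (j - 1) | S (i - 1) < S i} := by
    ext i
    simp only [mem_filter, mem_Icc]
    omega
  rw [hfilter, sum_filter_of_ne fun i _ hi => by omega, hS.sum_Icc_tsub (by omega)]

theorem card_partitionsWithMaxima (hS : IsSPath m S) :
    #(partitionsWithMaxima (Icc 1 m) {j ∈ Icc 1 m | S (j - 1) < S j} fun j => S j - S (j - 1)) =
      ∏ j ∈ Icc 1 m with S (j - 1) < S j, (j - 1 - S (j - 1)).choose (j - S j) := by
  have hsum := hS.sum_ascents_lt (j := m + 1) (by omega) le_rfl
  rw [filter_true_of_mem fun i hi => Order.lt_add_one_iff.2 (mem_Icc.1 (mem_filter.1 hi).1).2,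
    Nat.add_sub_cancel, hS.2.1] at hsum
  rw [_root_.card_partitionsWithMaxima (filter_subset _ _) (fun j hj => by
    simp only [mem_filter] at hj; omega) (by rw [hsum, Nat.card_Icc]; omega)]
  refine prod_congr rfl fun j hj => ?_
  obtain ⟨hjI, hasc⟩ := mem_filter.1 hj
  obtain ⟨hj1, hjm⟩ := mem_Icc.1 hjI
  have hbelow : {x ∈ Icc 1 m | x < j} = Icc 1 (j - 1) := by
    ext x
    simp only [mem_filter, mem_Icc]
    omega
  have hSj := hS.le_self hjm
  rw [hbelow, Nat.card_Icc, hS.sum_ascents_lt hj1 (by omega)]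
  exact Nat.choose_symm_of_eq_add (by omega)

end IsSPath

lemma correspondsTo_iff {m : ℕ} {S : ℕ → ℕ} :
    CorrespondsTo m S P ↔ IsPartitionWithMaxima (Icc 1 m) {j ∈ Icc 1 m | S (j - 1) < S j}
      (fun j => S j - S (j - 1)) P := by
  constructor
  · rintro ⟨⟨hsub, huniq⟩, hmax, hsurj⟩
    refine ⟨fun C hC => (hsub C hC).2, fun i hi => ?_, fun C hC D hD i hiC hiD => ?_,
      fun C hC => ?_, fun j hj => hsurj j (mem_filter.1 hj).1 (mem_filter.1 hj).2⟩
    · obtain ⟨C, ⟨hC, hiC⟩, -⟩ := huniq i hi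
      exact ⟨C, hC, hiC⟩
    · exact (huniq i ((hsub C hC).2 hiC)).unique ⟨hC, hiC⟩ ⟨hD, hiD⟩
    · obtain ⟨j, hCmax, hasc, hCcard⟩ := hmax C hC
      exact ⟨j, mem_filter.2 ⟨(hsub C hC).2 (mem_of_max hCmax), hasc⟩, hCmax, hCcard⟩
  · intro h
    refine ⟨⟨fun C hC => ⟨?_, h.subset C hC⟩, fun i hi => ?_⟩, fun C hC => ?_,
      fun j hj hasc => h.exists_max j (mem_filter.2 ⟨hj, hasc⟩)⟩
    · obtain ⟨j, -, hCmax, -⟩ := h.max_card C hC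
      exact ⟨j, mem_of_max hCmax⟩
    · obtain ⟨C, hC, hiC⟩ := h.cover i hi
      exact ⟨C, ⟨hC, hiC⟩, fun D ⟨hD, hiD⟩ => h.eq_of_mem D hD C hC i hiD hiC⟩
    · obtain ⟨j, hj, hCmax, hCcard⟩ := h.max_card C hC
      exact ⟨j, hCmax, (mem_filter.1 hj).2, hCcard⟩

/-- If the weight of a partition is `w(p) ∝ ∏_{C ∈ p} ψ^{(|C|)}(max C)` with positive `ψ`,
then conditionally on the induced S-path `S`, the partition is uniform on `C_S`:
its conditional probability equals `1/|C_S|` with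
`|C_S| = ∏_{j : S_j > S_{j-1}} C(j-1-S_{j-1}, j-S_j)`. -/
theorem conditional_uniform_on_class (m : ℕ) (S : ℕ → ℕ) (hS : IsSPath m S)
    (ψ : ℕ → ℕ → ℝ) (hψ : ∀ k j, 0 < ψ k j)
    (P : Finset (Finset ℕ)) (hP : CorrespondsTo m S P) :
    (∏ C ∈ P, ψ C.card (WithBot.unbotD 0 C.max)) /
        (∑ᶠ P' ∈ {P' : Finset (Finset ℕ) | CorrespondsTo m S P'},
          ∏ C ∈ P', ψ C.card (WithBot.unbotD 0 C.max)) =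
      1 / ∏ j ∈ (Finset.Icc 1 m).filter (fun j => S (j - 1) < S j),
            (Nat.choose (j - 1 - S (j - 1)) (j - S j) : ℝ) := by
  have hclass : {P' | CorrespondsTo m S P'} = (partitionsWithMaxima (Icc 1 m)
      {j ∈ Icc 1 m | S (j - 1) < S j} fun j => S j - S (j - 1) : Set (Finset (Finset ℕ))) := by
    ext P'
    exact correspondsTo_iff.trans mem_partitionsWithMaxima.symm
  rw [hclass, finsum_mem_coe_finset,
    div_sum_eq_one_div_card (prod_pos fun j _ => hψ _ j).ne'
      (fun P' hP' => (mem_partitionsWithMaxima.1 hP').prod_eq ψ)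
      (mem_partitionsWithMaxima.2 (correspondsTo_iff.1 hP)),
    hS.card_partitionsWithMaxima, Nat.cast_prod]
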